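/- arXiv:1804.00593 — 13 statements merged into one kernel-verified Lean document; each statement's English description precedes it below -/
import Mathlib

section
/- Let S be a commutative semiring with an O∞-Euclidean norm δ (where O is a well-ordered set with no greatest element, extended by +∞, δ(s) = +∞ iff s = 0, and for all a, b with b ≠ 0 there exist q, r with a = bq + r and r = 0 or δ(r) < δ(b)). Then there exists an O∞-Euclidean norm δ* on S such that δ*(a) ≤ δ(a) for all a ∈ S and δ*(b) ≤ δ(sb) for all b, s ∈ S. -/
/-- Given an O∞-Euclidean norm δ on a commutative semiring S, there
exists an O∞-Euclidean norm δ* with δ*(a) ≤ δ(a) and δ*(b) ≤ δ(s*b). -/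
theorem euclidean_norm_improvement {S O : Type*} [CommSemiring S] [Nontrivial S]
    [LinearOrder O] [WellFoundedLT O] [NoMaxOrder O]
    (δ : S → WithTop O)
    (h1 : ∀ s : S, δ s = ⊤ ↔ s = 0)
    (h2 : ∀ a b : S, b ≠ 0 → ∃ q r : S, a = b * q + r ∧ (r = 0 ∨ δ r < δ b)) :
    ∃ δ' : S → WithTop O,
      (∀ s : S, δ' s = ⊤ ↔ s = 0) ∧
      (∀ a b : S, b ≠ 0 → ∃ q r : S, a = b * q + r ∧ (r = 0 ∨ δ' r < δ' b)) ∧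
      (∀ a : S, δ' a ≤ δ a) ∧
      (∀ b s : S, δ' b ≤ δ (s * b)) := by
  classical
  have wf : WellFounded ((· < ·) : WithTop O → WithTop O → Prop) := wellFounded_lt
  set T : S → Set (WithTop O) := fun b => {x | ∃ s : S, x = δ (s * b)} with hT
  have hne : ∀ b, (T b).Nonempty := fun b => ⟨δ (1 * b), 1, rfl⟩
  set δ' : S → WithTop O := fun b => wf.min (T b) (hne b) with hδ'
  have hmem : ∀ b, ∃ s : S, δ' b = δ (s * b) := fun b => wf.min_mem (T b) (hne b)
  have hle : ∀ b s : S, δ' b ≤ δ (s * b) := by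
    intro b s
    have := wf.not_lt_min (T b) (x := δ (s * b)) ⟨s, rfl⟩
    exact not_lt.mp this
  have hle1 : ∀ b : S, δ' b ≤ δ b := by
    intro b
    simpa using hle b 1
  refine ⟨δ', ?_, ?_, hle1, hle⟩
  · intro b
    constructor
    · intro h
      have : δ b = ⊤ := top_le_iff.mp (h ▸ hle1 b)
      exact (h1 b).mp this
    · rintro rfl
      obtain ⟨s, hs⟩ := hmem 0
      rw [hs, mul_zero]
      exact (h1 0).mpr rfl
  · intro a b hb
    obtain ⟨s, hs⟩ := hmem b
    have hsb : s * b ≠ 0 := by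
      intro h
      have : δ' b = ⊤ := by rw [hs, h]; exact (h1 0).mpr rfl
      have : δ b = ⊤ := top_le_iff.mp (this ▸ hle1 b)
      exact hb ((h1 b).mp this)
    obtain ⟨q, r, hqr, hr⟩ := h2 a (s * b) hsb
    refine ⟨s * q, r, by rw [hqr]; ring_nf, ?_⟩
    rcases hr with rfl | hr
    · exact Or.inl rfl
    · exact Or.inr (lt_of_le_of_lt (hle1 r) (hs ▸ hr))
end

section
/- Let S be a commutative semiring equipped with an O∞-Euclidean norm. Then every subtractive ideal of S is principal. -/
/-!
Take a nonzero `b ∈ I` of minimal norm. Dividing any `x ∈ I` by `b` gives `x = b * q + r`; since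
`b * q ∈ I` and `I` is subtractive, `r ∈ I`, so minimality forces `r = 0` and `b ∣ x`.
-/

section EuclideanNorm

variable {S β : Type*} [CommSemiring S] [LT β] (δ : S → β)

theorem Ideal.eq_span_singleton_of_not_lt_of_subtractive
    (hdiv : ∀ a b : S, b ≠ 0 → ∃ q r : S, a = b * q + r ∧ (r = 0 ∨ δ r < δ b))
    {I : Ideal S} (hsub : ∀ a b : S, a + b ∈ I → a ∈ I → b ∈ I)
    {b : S} (hbI : b ∈ I) (hb : b ≠ 0) (hmin : ∀ r ∈ I, r ≠ 0 → ¬δ r < δ b) :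
    I = Ideal.span {b} := by
  refine le_antisymm (fun x hx => ?_) (Ideal.span_singleton_le_iff_mem I |>.mpr hbI)
  obtain ⟨q, r, rfl, hr⟩ := hdiv x b hb
  have hrI : r ∈ I := hsub (b * q) r hx (I.mul_mem_right q hbI)
  obtain rfl : r = 0 := by
    by_contra hr0
    exact hmin r hrI hr0 (hr.resolve_left hr0)
  simpa using Ideal.mul_mem_right q _ (Ideal.mem_span_singleton_self b)

theorem Ideal.exists_eq_span_singleton_of_subtractive [WellFoundedLT β]
    (hdiv : ∀ a b : S, b ≠ 0 → ∃ q r : S, a = b * q + r ∧ (r = 0 ∨ δ r < δ b))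
    (I : Ideal S) (hsub : ∀ a b : S, a + b ∈ I → a ∈ I → b ∈ I) :
    ∃ a : S, I = Ideal.span {a} := by
  rcases eq_or_ne I ⊥ with rfl | hI
  · exact ⟨0, Ideal.span_singleton_eq_bot.mpr rfl |>.symm⟩
  obtain ⟨b, ⟨hbI, hb⟩, hmin⟩ := (InvImage.wf δ wellFounded_lt).has_min {x | x ∈ I ∧ x ≠ 0}
    (Submodule.exists_mem_ne_zero_of_ne_bot hI)
  exact ⟨b, eq_span_singleton_of_not_lt_of_subtractive δ hdiv hsub hbI hb
    fun r hrI hr0 => hmin r ⟨hrI, hr0⟩⟩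

end EuclideanNorm

theorem subtractive_ideal_principal_of_euclidean_general {S O : Type*} [CommSemiring S]
    [LinearOrder O] [WellFoundedLT O]
    (δ : S → WithTop O)
    (h2 : ∀ a b : S, b ≠ 0 → ∃ q r : S, a = b * q + r ∧ (r = 0 ∨ δ r < δ b))
    (I : Ideal S)
    (hsub : ∀ a b : S, a + b ∈ I → a ∈ I → b ∈ I) :
    ∃ a : S, I = Ideal.span {a} :=
  Ideal.exists_eq_span_singleton_of_subtractive δ h2 I hsub

/-- In a commutative semiring with an O∞-Euclidean norm, every
subtractive ideal is principal. -/
theorem subtractive_ideal_principal_of_euclidean {S O : Type*} [CommSemiring S] [Nontrivial S]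
    [LinearOrder O] [WellFoundedLT O] [NoMaxOrder O]
    (δ : S → WithTop O)
    (h1 : ∀ s : S, δ s = ⊤ ↔ s = 0)
    (h2 : ∀ a b : S, b ≠ 0 → ∃ q r : S, a = b * q + r ∧ (r = 0 ∨ δ r < δ b))
    (I : Ideal S)
    (hsub : ∀ a b : S, a + b ∈ I → a ∈ I → b ∈ I) :
    ∃ a : S, I = Ideal.span {a} :=
  subtractive_ideal_principal_of_euclidean_general δ h2 I hsub
end

section
/- Every nonzero prime ideal of a principal ideal semidomain is a maximal ideal. -/
/-- Every nonzero prime ideal of a principal ideal semidomain is maximal. -/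
theorem prime_is_maximal_of_PISD {S : Type*} [CommSemiring S] [Nontrivial S] [IsCancelMulZero S]
    (hpis : ∀ I : Ideal S, ∃ a : S, I = Ideal.span {a})
    (P : Ideal S) (hP : P.IsPrime) (hne : P ≠ ⊥) :
    P.IsMaximal := by
  constructor
  constructor
  · exact hP.ne_top
  · intro M hM
    obtain ⟨p, hp⟩ := hpis P
    obtain ⟨m, hm⟩ := hpis M
    have hpM : p ∈ M := hM.le (hp ▸ Ideal.mem_span_singleton_self p)
    rw [hm, Ideal.mem_span_singleton] at hpM
    obtain ⟨s, hs⟩ := hpM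
    have hpP : p ∈ P := hp ▸ Ideal.mem_span_singleton_self p
    have hmem : m * s ∈ P := hs ▸ hpP
    rcases hP.mem_or_mem hmem with hmP | hsP
    · exfalso
      have : M ≤ P := by
        rw [hm, Ideal.span_le]
        simpa using hmP
      exact (not_le_of_gt hM) this
    · rw [hp, Ideal.mem_span_singleton] at hsP
      obtain ⟨t, ht⟩ := hsP
      have hp0 : p ≠ 0 := by
        rintro rfl
        apply hne
        rw [hp, Ideal.span_singleton_eq_bot]
      have : p * 1 = p * (t * m) := by
        rw [mul_one]
        calc p = m * s := hs
          _ = m * (p * t) := by rw [ht]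
          _ = p * (t * m) := by ring
      have h1 : (1 : S) = t * m := mul_left_cancel₀ hp0 this
      rw [hm, Ideal.span_singleton_eq_top]
      exact IsUnit.of_mul_eq_one (a := m) t (by rw [mul_comm]; exact h1.symm)
end

section
/- In a principal ideal semidomain, a nonzero element is prime if and only if it is irreducible. -/
/-- In a principal ideal semidomain, a nonzero element is prime iff irreducible. -/
theorem prime_iff_irreducible_PISD {S : Type*} [CommSemiring S] [Nontrivial S] [IsCancelMulZero S]
    (hpis : ∀ I : Ideal S, ∃ a : S, I = Ideal.span {a})
    (s : S) (hs : s ≠ 0) :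
    Prime s ↔ Irreducible s := by
  constructor
  · intro hp
    refine ⟨hp.not_unit, fun a b hab => ?_⟩
    have hdvd : s ∣ a * b := ⟨1, by rw [mul_one]; exact hab.symm⟩
    rcases hp.dvd_or_dvd hdvd with ⟨c, hc⟩ | ⟨c, hc⟩
    · right
      have ha : a ≠ 0 := fun h => hs (by rw [hab, h, zero_mul])
      have key : a * 1 = a * (b * c) := by
        rw [mul_one, ← mul_assoc, ← hab, ← hc]
      exact IsUnit.of_mul_eq_one (a := b) c (mul_left_cancel₀ ha key).symm
    · left
      have hb : b ≠ 0 := fun h => hs (by rw [hab, h, mul_zero])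
      have key : b * 1 = b * (a * c) := by
        rw [mul_one, ← mul_assoc, mul_comm b a, ← hab, ← hc]
      exact IsUnit.of_mul_eq_one (a := a) c (mul_left_cancel₀ hb key).symm
  · intro hirr
    rw [← Ideal.span_singleton_prime hs]
    have hmax : (Ideal.span {s}).IsMaximal := by
      constructor
      constructor
      · intro htop
        have hmem : (1 : S) ∈ Ideal.span ({s} : Set S) := htop ▸ Submodule.mem_top
        obtain ⟨r, hr⟩ := Ideal.mem_span_singleton'.mp hmem
        exact hirr.not_isUnit (IsUnit.of_mul_eq_one (a := s) r (by rw [mul_comm]; exact hr))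
      · intro I hI
        obtain ⟨a, rfl⟩ := hpis I
        have hmem : s ∈ Ideal.span ({a} : Set S) := hI.le (Ideal.mem_span_singleton_self s)
        obtain ⟨r, hr⟩ := Ideal.mem_span_singleton'.mp hmem
        rcases hirr.isUnit_or_isUnit hr.symm with hu | hu
        · exfalso
          apply hI.ne
          apply le_antisymm hI.le
          rw [Ideal.span_singleton_le_iff_mem, Ideal.mem_span_singleton']
          obtain ⟨u, rfl⟩ := hu
          refine ⟨(↑u⁻¹ : Sˣ), ?_⟩
          rw [← hr, ← mul_assoc, Units.inv_mul, one_mul]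
        · rw [Ideal.eq_top_iff_one, Ideal.mem_span_singleton']
          obtain ⟨u, rfl⟩ := hu
          exact ⟨(↑u⁻¹ : Sˣ), Units.inv_mul u⟩
    exact hmax.isPrime
end

section
/- If S is a subtractive principal ideal semidomain, then S is a Gaussian semiring, i.e., c(fg) = c(f)c(g) for all polynomials f, g ∈ S[X], where c(f) denotes the ideal of S generated by the coefficients of f. -/
/-- The content of a polynomial over a semiring: the ideal generated by its coefficients. -/
def semiringContent {S : Type*} [CommSemiring S] (f : Polynomial S) : Ideal S :=
  Ideal.span (Set.range f.coeff)

/-!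
Write `c(f) = (a)` and `c(g) = (b)`. Then `f = a f₁` and `g = b g₁`, and cancelling the nonzero
principal ideals `(a)`, `(b)` gives `c(f₁) = c(g₁) = S`, so it suffices that a product of
primitive polynomials is primitive. If `c(f₁ g₁)` lay in a maximal ideal `M`, take the least
indices `i`, `j` with `f₁ᵢ, g₁ⱼ ∉ M`: the coefficient of `X^(i+j)` in `f₁ g₁` is `f₁ᵢ g₁ⱼ` plus
a sum of terms in `M`, so subtractivity puts `f₁ᵢ g₁ⱼ` in the prime `M`, a contradiction.
-/

open Polynomial Ideal

theorem Ideal.span_singleton_mul_right_inj₀ {S : Type*} [CommSemiring S] [IsLeftCancelMulZero S]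
    {a : S} (ha : a ≠ 0) {I J : Ideal S} : span {a} * I = span {a} * J ↔ I = J := by
  have mono : ∀ {I J : Ideal S}, span {a} * I ≤ span {a} * J → I ≤ J := fun hIJ x hx => by
    obtain ⟨y, hy, hxy⟩ :=
      mem_span_singleton_mul.1 (hIJ (mul_mem_mul (mem_span_singleton_self a) hx))
    rwa [← mul_left_cancel₀ ha hxy]
  exact ⟨fun h => le_antisymm (mono h.le) (mono h.ge), congrArg _⟩

section Content

variable {S : Type*} [CommSemiring S]

theorem coeff_mem_semiringContent (f : S[X]) (n : ℕ) : f.coeff n ∈ semiringContent f :=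
  subset_span ⟨n, rfl⟩

theorem semiringContent_le_iff {f : S[X]} {I : Ideal S} :
    semiringContent f ≤ I ↔ ∀ n, f.coeff n ∈ I := by
  rw [semiringContent, span_le, Set.range_subset_iff]
  rfl

theorem semiringContent_eq_bot_iff {f : S[X]} : semiringContent f = ⊥ ↔ f = 0 := by
  rw [← le_bot_iff, semiringContent_le_iff, Polynomial.ext_iff]
  simp

@[simp]
theorem semiringContent_zero : semiringContent (0 : S[X]) = ⊥ :=
  semiringContent_eq_bot_iff.2 rfl

theorem semiringContent_C_mul (a : S) (f : S[X]) :
    semiringContent (C a * f) = span {a} * semiringContent f := by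
  rw [semiringContent, semiringContent, span_mul_span', Set.singleton_mul, ← Set.range_comp]
  congr 2
  ext n
  exact coeff_C_mul f

theorem exists_eq_C_mul_semiringContent_eq_top [IsLeftCancelMulZero S] {f : S[X]} {a : S}
    (hf : f ≠ 0) (h : semiringContent f = span {a}) :
    ∃ f₁ : S[X], f = C a * f₁ ∧ semiringContent f₁ = ⊤ := by
  have ha : a ≠ 0 := by
    rintro rfl
    exact hf (semiringContent_eq_bot_iff.1 (h.trans (span_singleton_eq_bot.2 rfl)))
  obtain ⟨f₁, rfl⟩ : C a ∣ f := (C_dvd_iff_dvd_coeff a f).2 fun n =>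
    mem_span_singleton.1 (h ▸ coeff_mem_semiringContent f n)
  refine ⟨f₁, rfl, (span_singleton_mul_right_inj₀ ha).1 ?_⟩
  rw [← semiringContent_C_mul, h, mul_top]

theorem coeff_mul_mem_of_forall_lt_mem {P : Ideal S}
    (hP : ∀ a b : S, a + b ∈ P → a ∈ P → b ∈ P) {f g : S[X]} {i j : ℕ}
    (hf : ∀ k < i, f.coeff k ∈ P) (hg : ∀ l < j, g.coeff l ∈ P)
    (hfg : (f * g).coeff (i + j) ∈ P) : f.coeff i * g.coeff j ∈ P := by
  classical
  have hij : (i, j) ∈ Finset.HasAntidiagonal.antidiagonal (i + j) :=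
    Finset.HasAntidiagonal.mem_antidiagonal.2 rfl
  rw [coeff_mul, ← Finset.add_sum_erase _ _ hij, add_comm] at hfg
  refine hP _ _ hfg (sum_mem fun ⟨k, l⟩ hkl => ?_)
  obtain ⟨hne, hkl⟩ := Finset.mem_erase.1 hkl
  rw [Finset.HasAntidiagonal.mem_antidiagonal] at hkl
  rcases lt_or_ge k i with hk | hk
  · exact mul_mem_right _ _ (hf k hk)
  · have hl : l < j := by
      by_contra! hl
      exact hne (Prod.ext_iff.2 ⟨by omega, by omega⟩)
    exact mul_mem_left _ _ (hg l hl)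

theorem semiringContent_le_or_le_of_mul_le {P : Ideal S} [P.IsPrime]
    (hP : ∀ a b : S, a + b ∈ P → a ∈ P → b ∈ P) {f g : S[X]}
    (h : semiringContent (f * g) ≤ P) : semiringContent f ≤ P ∨ semiringContent g ≤ P := by
  classical
  simp only [semiringContent_le_iff] at h ⊢
  by_contra! ⟨hf, hg⟩
  have hi := Nat.find_spec hf
  have hj := Nat.find_spec hg
  have hprod := coeff_mul_mem_of_forall_lt_mem hP
    (fun k hk => not_not.1 (Nat.find_min hf hk)) (fun l hl => not_not.1 (Nat.find_min hg hl))
    (h _)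
  exact (‹P.IsPrime›.mem_or_mem hprod).elim hi hj

theorem semiringContent_mul_eq_top
    (hsub : ∀ (I : Ideal S) (a b : S), a + b ∈ I → a ∈ I → b ∈ I)
    {f g : S[X]} (hf : semiringContent f = ⊤) (hg : semiringContent g = ⊤) :
    semiringContent (f * g) = ⊤ := by
  by_contra h
  obtain ⟨M, hM, hle⟩ := exists_le_maximal _ h
  rcases semiringContent_le_or_le_of_mul_le (hsub M) hle with h | h
  · exact hM.ne_top (top_le_iff.1 (hf ▸ h))
  · exact hM.ne_top (top_le_iff.1 (hg ▸ h))

end Content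

theorem subtractive_PISD_gaussian_general {S : Type*} [CommSemiring S] [IsCancelMulZero S]
    (hsub : ∀ (I : Ideal S) (a b : S), a + b ∈ I → a ∈ I → b ∈ I)
    (hpis : ∀ I : Ideal S, ∃ a : S, I = Ideal.span {a})
    (f g : Polynomial S) :
    semiringContent (f * g) = semiringContent f * semiringContent g := by
  rcases eq_or_ne f 0 with rfl | hf
  · simp
  rcases eq_or_ne g 0 with rfl | hg
  · simp
  obtain ⟨a, ha⟩ := hpis (semiringContent f)
  obtain ⟨b, hb⟩ := hpis (semiringContent g)
  obtain ⟨f₁, rfl, hf₁⟩ := exists_eq_C_mul_semiringContent_eq_top hf ha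
  obtain ⟨g₁, rfl, hg₁⟩ := exists_eq_C_mul_semiringContent_eq_top hg hb
  rw [ha, hb, mul_mul_mul_comm, ← C_mul, semiringContent_C_mul,
    semiringContent_mul_eq_top hsub hf₁ hg₁, mul_top, span_singleton_mul_span_singleton]

/-- A subtractive principal ideal semidomain is Gaussian:
c(fg) = c(f)c(g) for all polynomials f,g. -/
theorem subtractive_PISD_gaussian {S : Type*} [CommSemiring S] [Nontrivial S] [IsCancelMulZero S]
    (hsub : ∀ (I : Ideal S) (a b : S), a + b ∈ I → a ∈ I → b ∈ I)
    (hpis : ∀ I : Ideal S, ∃ a : S, I = Ideal.span {a})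
    (f g : Polynomial S) :
    semiringContent (f * g) = semiringContent f * semiringContent g :=
  subtractive_PISD_gaussian_general hsub hpis f g
end

section
/- Every principal ideal semidomain is a unique factorization semidomain: every irreducible element is prime, and every nonzero nonunit element is a product of irreducible elements. -/
theorem PrincipalIdealRing.prime_of_irreducible {R : Type*} [CommSemiring R]
    [IsPrincipalIdealRing R] {p : R} (hp : Irreducible p) : Prime p :=
  (Ideal.span_singleton_prime hp.ne_zero).mp (isMaximal_of_irreducible hp).isPrime

/-- Every principal ideal semidomain is a unique factorization semidomain. -/
theorem PISD_is_UFSD {S : Type*} [CommSemiring S] [Nontrivial S] [IsCancelMulZero S]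
    (hpis : ∀ I : Ideal S, ∃ a : S, I = Ideal.span {a}) :
    (∀ s : S, Irreducible s → Prime s) ∧
    (∀ s : S, s ≠ 0 → ¬IsUnit s →
      ∃ l : Multiset S, (∀ x ∈ l, Irreducible x) ∧ l.prod = s) := by
  have : IsDomain S := {}
  have : IsPrincipalIdealRing S := ⟨fun I => ⟨hpis I⟩⟩
  refine ⟨fun p hp => PrincipalIdealRing.prime_of_irreducible hp, fun s hs hsu => ?_⟩
  -- `WfDvdMonoid S` comes from the instance chain principal → Noetherian → well-founded `∣`.
  obtain ⟨l, hirr, hprod, -⟩ := (WfDvdMonoid.not_isUnit_iff_exists_factors_eq s hs).mp hsu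
  exact ⟨l, hirr, hprod⟩
end

section
/- A semidomain S is a unique factorization semidomain if and only if every nonzero prime ideal of S contains a prime element. -/
set_option linter.unusedSectionVars false

def auxCancel {S : Type*} [CommSemiring S] [IsCancelMulZero S] :
    CancelCommMonoidWithZero S :=
  { ‹CommSemiring S›.toCommMonoidWithZero, ‹IsCancelMulZero S› with }

section Aux
variable {S : Type*} [CommSemiring S] [Nontrivial S] [IsCancelMulZero S]

def InM (s : S) : Prop := ∃ m : Multiset S, (∀ p ∈ m, Prime p) ∧ Associated m.prod s

theorem InM.one : InM (1 : S) := ⟨0, by simp, by simp⟩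

theorem InM.mul {a b : S} (ha : InM a) (hb : InM b) : InM (a * b) := by
  obtain ⟨m, hm, hma⟩ := ha
  obtain ⟨n, hn, hnb⟩ := hb
  exact ⟨m + n, fun p hp => by rcases Multiset.mem_add.mp hp with h | h; exacts [hm p h, hn p h],
    by rw [Multiset.prod_add]; exact hma.mul_mul hnb⟩

theorem InM.of_isUnit {a : S} (ha : IsUnit a) : InM a :=
  ⟨0, by simp, by simpa using (associated_one_iff_isUnit.mpr ha).symm⟩

theorem InM.prime {p : S} (hp : Prime p) : InM p := ⟨{p}, by simpa, by rw [Multiset.prod_singleton]⟩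

theorem inM_saturated : ∀ (m : Multiset S), (∀ p ∈ m, Prime p) → ∀ a b : S,
    Associated m.prod (a * b) → InM a := by
  intro m
  induction m using Multiset.induction with
  | empty =>
    intro _ a b h
    simp only [Multiset.prod_zero] at h
    exact InM.of_isUnit (isUnit_of_mul_isUnit_left (associated_one_iff_isUnit.mp h.symm))
  | cons p m ih =>
    intro hm a b h
    have hp : Prime p := hm p (Multiset.mem_cons_self p m)
    have hm' : ∀ q ∈ m, Prime q := fun q hq => hm q (Multiset.mem_cons_of_mem hq)
    rw [Multiset.prod_cons] at h
    rcases hp.dvd_mul.mp ((dvd_mul_right p m.prod).trans h.dvd) with ⟨c, rfl⟩ | ⟨c, rfl⟩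
    · have : Associated m.prod (c * b) := by
        refine Associated.of_mul_left ?_ (Associated.refl p) hp.ne_zero
        rwa [mul_assoc] at h
      exact (InM.prime hp).mul (ih hm' c b this)
    · have : Associated m.prod (a * c) := by
        refine Associated.of_mul_left ?_ (Associated.refl p) hp.ne_zero
        rw [show a * (p * c) = p * (a * c) by ring] at h
        exact h
      exact ih hm' a c this

end Aux

/-- A semidomain is a UFSD iff every nonzero prime ideal contains a prime
element. -/
theorem UFSD_iff_prime_ideals_contain_prime {S : Type*} [CommSemiring S] [Nontrivial S]
    [IsCancelMulZero S] :
    ((∀ s : S, Irreducible s → Prime s) ∧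
      (∀ s : S, s ≠ 0 → ¬IsUnit s →
        ∃ l : Multiset S, (∀ x ∈ l, Irreducible x) ∧ l.prod = s)) ↔
    (∀ P : Ideal S, P.IsPrime → P ≠ ⊥ → ∃ p ∈ P, Prime p) := by
  constructor
  · rintro ⟨h1, h2⟩ P hP hPbot
    obtain ⟨s, hsP, hs0⟩ := Submodule.ne_bot_iff P |>.mp hPbot
    have hsu : ¬IsUnit s := fun hu => hP.ne_top (P.eq_top_of_isUnit_mem hsP hu)
    obtain ⟨l, hl, hprod⟩ := h2 s hs0 hsu
    subst hprod
    clear hs0 hsu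
    induction l using Multiset.induction with
    | empty =>
      simp only [Multiset.prod_zero] at hsP
      exact absurd (P.eq_top_iff_one.mpr hsP) hP.ne_top
    | cons a l ih =>
      rw [Multiset.prod_cons] at hsP
      rcases hP.mem_or_mem hsP with h | h
      · exact ⟨a, h, h1 a (hl a (Multiset.mem_cons_self a l))⟩
      · exact ih (fun x hx => hl x (Multiset.mem_cons_of_mem hx)) h
  · intro h
    -- the submonoid of products of primes up to units
    set M : Submonoid S :=
      { carrier := setOf InM
        one_mem' := InM.one
        mul_mem' := fun ha hb => InM.mul ha hb } with hM
    have key : ∀ s : S, s ≠ 0 → InM s := by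
      intro s hs0
      by_contra hsM
      have hdisj : Disjoint (Ideal.span {s} : Set S) (M : Set S) := by
        rw [Set.disjoint_left]
        intro x hx hxM
        obtain ⟨a, rfl⟩ := Ideal.mem_span_singleton'.mp hx
        obtain ⟨m, hm, hassoc⟩ := hxM
        rw [mul_comm] at hassoc
        exact hsM (inM_saturated m hm s a hassoc)
      obtain ⟨P, hP, hle, hPd⟩ := Ideal.exists_le_prime_disjoint _ M hdisj
      have hsP : s ∈ P := hle (Ideal.mem_span_singleton_self s)
      have hPbot : P ≠ ⊥ := (Submodule.ne_bot_iff P).mpr ⟨s, hsP, hs0⟩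
      obtain ⟨p, hpP, hp⟩ := h P hP hPbot
      exact Set.disjoint_left.mp hPd hpP (InM.prime hp)
    constructor
    · intro s hirr
      have hs0 : s ≠ 0 := hirr.ne_zero
      obtain ⟨m, hm, u, hu⟩ := key s hs0
      rcases Multiset.empty_or_exists_mem m with rfl | ⟨p, hpm⟩
      · exact absurd (by rw [← hu]; simp [u.isUnit] : IsUnit s) hirr.not_isUnit
      obtain ⟨m', rfl⟩ := Multiset.exists_cons_of_mem hpm
      have hp : Prime p := hm p hpm
      rw [Multiset.prod_cons] at hu
      have hs : s = p * (m'.prod * u) := by rw [← hu]; ring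
      rcases hirr.isUnit_or_isUnit hs with hup | hum
      · exact absurd hup hp.not_unit
      · have hps : Associated p s := ⟨hum.unit, by rw [IsUnit.unit_spec]; exact hs.symm⟩
        exact hps.prime hp
    · intro s hs0 hsu
      obtain ⟨m, hm, u, hu⟩ := key s hs0
      rcases Multiset.empty_or_exists_mem m with rfl | ⟨p, hpm⟩
      · exact absurd (by rw [← hu]; simp [u.isUnit] : IsUnit s) hsu
      obtain ⟨m', rfl⟩ := Multiset.exists_cons_of_mem hpm
      have hp : Prime p := hm p hpm
      refine ⟨(p * u) ::ₘ m', ?_, ?_⟩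
      · intro x hx
        rcases Multiset.mem_cons.mp hx with rfl | hx
        · exact ((associated_mul_unit_right p _ u.isUnit).prime hp).irreducible
        · exact (hm x (Multiset.mem_cons_of_mem hx)).irreducible
      · rw [Multiset.prod_cons, ← hu, Multiset.prod_cons]; ring
end

section
/- Let S be a semidomain. Then S equals the intersection, inside its semifield of fractions, of its localizations at all maximal ideals: ⋂_{m ∈ Max(S)} S_m = S. -/
/-!
An element `x` lies in `S` exactly when its ideal of denominators `{t | t x ∈ S}` is all of `S`,
and `x` lies in `S_m` exactly when that ideal is not contained in `m`. An ideal contained in no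
maximal ideal is the unit ideal.
-/

open Submodule

section Denominators

variable {S K : Type*} [CommSemiring S] [CommSemiring K] [Algebra S K]

theorem mem_one_colon_singleton_iff {x : K} {t : S} :
    t ∈ (1 : Submodule S K).colon {x} ↔ ∃ s, x * algebraMap S K t = algebraMap S K s := by
  simp only [mem_colon_singleton, mem_one, Algebra.smul_def, mul_comm x, eq_comm]

theorem mem_range_algebraMap_iff_one_colon_eq_top {x : K} :
    x ∈ Set.range (algebraMap S K) ↔ (1 : Submodule S K).colon {x} = ⊤ := by
  rw [Ideal.eq_top_iff_one, mem_one_colon_singleton_iff]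
  simp only [map_one, mul_one, Set.mem_range, eq_comm]

end Denominators

theorem inter_localizations_maximal_general {S K : Type*} [CommSemiring S]
    [CommSemiring K] [Algebra S K] :
    (⋂ m ∈ {m : Ideal S | m.IsMaximal},
        {x : K | ∃ s t : S, t ∉ m ∧ x * algebraMap S K t = algebraMap S K s}) =
      Set.range (algebraMap S K) := by
  ext x
  rw [mem_range_algebraMap_iff_one_colon_eq_top, ← not_ne_iff, Ideal.ne_top_iff_exists_maximal]
  simp only [Set.mem_iInter₂, Set.mem_ofPred_eq, not_exists, not_and]
  refine forall₂_congr fun m _ => ⟨fun ⟨s, t, htm, hst⟩ hle => htm (hle ?_), fun hnle => ?_⟩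
  · exact mem_one_colon_singleton_iff.mpr ⟨s, hst⟩
  · obtain ⟨t, ht, htm⟩ := SetLike.not_le_iff_exists.mp hnle
    obtain ⟨s, hst⟩ := mem_one_colon_singleton_iff.mp ht
    exact ⟨s, t, htm, hst⟩

/-- A semidomain is the intersection of its localizations at the maximal
ideals, inside its semifield of fractions. -/
theorem inter_localizations_maximal {S K : Type*} [CommSemiring S] [Nontrivial S]
    [IsCancelMulZero S] [CommSemiring K] [Algebra S K]
    [IsLocalization (nonZeroDivisors S) K] :
    (⋂ m ∈ {m : Ideal S | m.IsMaximal},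
        {x : K | ∃ s t : S, t ∉ m ∧ x * algebraMap S K t = algebraMap S K s}) =
      Set.range (algebraMap S K) :=
  inter_localizations_maximal_general
end

section
/- Let S be a semidomain. Then the following are equivalent: (1) S is integrally closed; (2) S_T is integrally closed for every multiplicatively closed subset T of S not containing 0; (3) S_m is integrally closed for every maximal ideal m of S. -/
/-- A subset `A` of the semifield of fractions `K` is integrally closed if every `u ∈ K`
satisfying an equation `u^n + a₁u^{n-1} + ⋯ + aₙ = b₁u^{n-1} + ⋯ + bₙ` with all `aᵢ, bᵢ ∈ A`
lies in `A`. -/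
def IntClosedSubset {K : Type*} [CommSemiring K] (A : Set K) : Prop :=
  ∀ u : K,
    (∃ n : ℕ, 0 < n ∧ ∃ a b : ℕ → K, (∀ i, a i ∈ A) ∧ (∀ i, b i ∈ A) ∧
      u ^ n + ∑ i ∈ Finset.range n, a i * u ^ i = ∑ i ∈ Finset.range n, b i * u ^ i) →
    u ∈ A

/-- The localization `S_T` viewed as a subset of the semifield of fractions `K`. -/
def locSubset (S K : Type*) [CommSemiring S] [CommSemiring K] [Algebra S K]
    (T : Submonoid S) : Set K :=
  {x : K | ∃ s : S, ∃ t ∈ T, x * algebraMap S K t = algebraMap S K s}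

/-- For a semidomain S, the following are equivalent: S is integrally closed;
S_T is integrally closed for every MC-set T with 0 ∉ T; S_m is integrally closed for every
maximal ideal m. -/
theorem integrally_closed_local {S K : Type*} [CommSemiring S] [Nontrivial S]
    [IsCancelMulZero S] [CommSemiring K] [Algebra S K]
    [IsLocalization (nonZeroDivisors S) K] :
    (IntClosedSubset (Set.range (algebraMap S K)) ↔
      ∀ T : Submonoid S, (0 : S) ∉ T → IntClosedSubset (locSubset S K T)) ∧
    (IntClosedSubset (Set.range (algebraMap S K)) ↔
      ∀ (m : Ideal S) (hm : m.IsMaximal),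
        IntClosedSubset (locSubset S K (@Ideal.primeCompl S _ m hm.isPrime))) := by
  set f := algebraMap S K with hf
  -- the range of `f` is contained in every localization
  have hsub : ∀ T : Submonoid S, Set.range f ⊆ locSubset S K T := by
    rintro T _ ⟨s, rfl⟩
    exact ⟨s, 1, T.one_mem, by simp [hf]⟩
  -- being integral over `S` implies being integral over `S_T`
  have hint : ∀ (T : Submonoid S) (u : K),
      (∃ n : ℕ, 0 < n ∧ ∃ a b : ℕ → K, (∀ i, a i ∈ Set.range f) ∧ (∀ i, b i ∈ Set.range f) ∧
        u ^ n + ∑ i ∈ Finset.range n, a i * u ^ i = ∑ i ∈ Finset.range n, b i * u ^ i) →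
      (∃ n : ℕ, 0 < n ∧ ∃ a b : ℕ → K, (∀ i, a i ∈ locSubset S K T) ∧
        (∀ i, b i ∈ locSubset S K T) ∧
        u ^ n + ∑ i ∈ Finset.range n, a i * u ^ i = ∑ i ∈ Finset.range n, b i * u ^ i) := by
    rintro T u ⟨n, hn, a, b, ha, hb, heq⟩
    exact ⟨n, hn, a, b, fun i => hsub T (ha i), fun i => hsub T (hb i), heq⟩
  -- (1) → (2) : if S is integrally closed then every S_T is
  have key12 : IntClosedSubset (Set.range f) →
      ∀ T : Submonoid S, IntClosedSubset (locSubset S K T) := by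
    intro h T u hu
    obtain ⟨n, hn, a, b, ha, hb, heq⟩ := hu
    choose sa ta hta hsa using ha
    choose sb tb htb hsb using hb
    set t : S := ∏ i ∈ Finset.range n, (ta i * tb i) with htdef
    have htT : t ∈ T := Submonoid.prod_mem T fun i _ => T.mul_mem (hta i) (htb i)
    have hfa : ∀ i, i < n → ∃ r : S, f t * a i = f r := by
      intro i hi
      obtain ⟨c, hc⟩ : ta i ∣ t :=
        dvd_trans (Dvd.intro _ rfl) (Finset.dvd_prod_of_mem _ (Finset.mem_range.2 hi))
      refine ⟨c * sa i, ?_⟩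
      have h1 : f t * a i = f c * (a i * f (ta i)) := by rw [hc, map_mul]; ring
      rw [h1, hsa i, ← map_mul]
    have hfb : ∀ i, i < n → ∃ r : S, f t * b i = f r := by
      intro i hi
      obtain ⟨c, hc⟩ : tb i ∣ t :=
        dvd_trans (Dvd.intro_left _ rfl) (Finset.dvd_prod_of_mem _ (Finset.mem_range.2 hi))
      refine ⟨c * sb i, ?_⟩
      have h1 : f t * b i = f c * (b i * f (tb i)) := by rw [hc, map_mul]; ring
      rw [h1, hsb i, ← map_mul]
    choose! ra hra using hfa
    choose! rb hrb using hfb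
    set A : K := f t with hA
    have expand : ∀ (c : ℕ → K) (r : ℕ → S), (∀ i, i < n → f t * c i = f (r i)) →
        ∑ i ∈ Finset.range n, f (t ^ (n - 1 - i) * r i) * (A * u) ^ i
          = A ^ n * ∑ i ∈ Finset.range n, c i * u ^ i := by
      intro c r hr
      rw [Finset.mul_sum]
      apply Finset.sum_congr rfl
      intro i hi
      rw [Finset.mem_range] at hi
      have h1 : f (t ^ (n - 1 - i) * r i) = A ^ (n - 1 - i) * (A * c i) := by
        rw [map_mul, map_pow, hr i hi]
      have hpow : A ^ (n - 1 - i) * A * A ^ i = A ^ n := by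
        rw [← pow_succ, ← pow_add]
        congr 1
        omega
      calc f (t ^ (n - 1 - i) * r i) * (A * u) ^ i
          = (A ^ (n - 1 - i) * A * A ^ i) * (c i * u ^ i) := by rw [h1, mul_pow]; ring
        _ = A ^ n * (c i * u ^ i) := by rw [hpow]
    have key : A * u ∈ Set.range f := by
      apply h
      refine ⟨n, hn, fun i => f (t ^ (n - 1 - i) * ra i), fun i => f (t ^ (n - 1 - i) * rb i),
        fun i => ⟨_, rfl⟩, fun i => ⟨_, rfl⟩, ?_⟩
      rw [mul_pow, expand a ra hra, expand b rb hrb, ← mul_add, heq]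
    obtain ⟨s, hs⟩ := key
    refine ⟨s, t, htT, ?_⟩
    rw [hs]
    exact mul_comm _ _
  -- (2) → (1) : take T = ⊥
  have keyB : (∀ T : Submonoid S, (0 : S) ∉ T → IntClosedSubset (locSubset S K T)) →
      IntClosedSubset (Set.range f) := by
    intro h u hu
    have h0 : (0 : S) ∉ (⊥ : Submonoid S) := by
      rw [Submonoid.mem_bot]
      exact zero_ne_one
    obtain ⟨s, t, ht, hts⟩ := h ⊥ h0 u (hint ⊥ u hu)
    rw [Submonoid.mem_bot] at ht
    subst ht
    rw [map_one, mul_one] at hts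
    exact ⟨s, hts.symm⟩
  -- (3) → (1) : via the denominator ideal
  have key31 : (∀ (m : Ideal S) (hm : m.IsMaximal),
      IntClosedSubset (locSubset S K (@Ideal.primeCompl S _ m hm.isPrime))) →
      IntClosedSubset (Set.range f) := by
    intro h u hu
    set I : Ideal S :=
      { carrier := {s : S | u * f s ∈ Set.range f}
        add_mem' := by
          rintro x y ⟨px, hpx⟩ ⟨py, hpy⟩
          exact ⟨px + py, by rw [map_add, map_add, mul_add, hpx, hpy]⟩
        zero_mem' := ⟨0, by simp⟩
        smul_mem' := by
          rintro r x ⟨px, hpx⟩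
          refine ⟨r * px, ?_⟩
          rw [smul_eq_mul, map_mul, map_mul, hpx]
          ring } with hI
    have h1 : (1 : S) ∈ I := by
      by_contra h1
      have hIne : I ≠ ⊤ := fun hT => h1 (hT ▸ Submodule.mem_top)
      obtain ⟨m, hm, hIm⟩ := Ideal.exists_le_maximal I hIne
      obtain ⟨s, t, htm, hts⟩ := h m hm u (hint _ u hu)
      have htI : t ∈ I := ⟨s, hts.symm⟩
      exact htm (hIm htI)
    obtain ⟨s, hs⟩ := h1
    rw [map_one, mul_one] at hs
    exact ⟨s, hs⟩
  exact ⟨⟨fun h T _ => key12 h T, keyB⟩, ⟨fun h m hm => key12 h _, key31⟩⟩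
end

section
/- Let S be a commutative semiring such that for every maximal ideal m, the localization S_m has no nonzero nilpotent elements. Then S has no nonzero nilpotent elements. -/
theorem nilpotentFree_of_local_general {S : Type*} [CommSemiring S]
    (h : ∀ (m : Ideal S) (hm : m.IsMaximal),
      ∀ x : Localization (@Ideal.primeCompl S _ m hm.isPrime),
        x ≠ 0 → ∀ n : ℕ, 1 ≤ n → x ^ n ≠ 0) :
    ∀ s : S, s ≠ 0 → ∀ n : ℕ, 1 ≤ n → s ^ n ≠ 0 := by
  intro s hs n hn hsn
  refine hs (eq_zero_of_localization s fun m hm ↦ ?_)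
  by_contra hsm
  exact h m hm _ hsm n hn (by rw [← map_pow, hsn, map_zero])

/-- If all localizations of a commutative semiring at maximal ideals are
nilpotent-free, then the semiring itself is nilpotent-free. -/
theorem nilpotentFree_of_local {S : Type*} [CommSemiring S] [Nontrivial S]
    (h : ∀ (m : Ideal S) (hm : m.IsMaximal),
      ∀ x : Localization (@Ideal.primeCompl S _ m hm.isPrime),
        x ≠ 0 → ∀ n : ℕ, 1 ≤ n → x ^ n ≠ 0) :
    ∀ s : S, s ≠ 0 → ∀ n : ℕ, 1 ≤ n → s ^ n ≠ 0 :=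
  nilpotentFree_of_local_general h
end

section
/- Let S be a GCD semidomain in which every principal ideal is subtractive. Then S is integrally closed in its semifield of fractions. -/
/-!
Since `S` has gcds, every `u` in the semifield of fractions is a reduced fraction `x / y`.
Multiplying the integral equation of `u` by `yⁿ` gives
`xⁿ + ∑ aᵢ xⁱ yⁿ⁻ⁱ = ∑ bᵢ xⁱ yⁿ⁻ⁱ` in `S`, where both sums lie in the principal ideal `(y)`.
As `(y)` is subtractive, `y ∣ xⁿ`. In a GCD monoid coprimality passes to powers, so `y` is
coprime to `xⁿ` and hence a unit, i.e. `u ∈ S`.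
-/

open Finset

def Ideal.IsSubtractive {S : Type*} [Semiring S] (I : Ideal S) : Prop :=
  ∀ a b : S, a + b ∈ I → a ∈ I → b ∈ I

theorem IsGCDMonoid.of_exists_gcd {S : Type*} [CommMonoidWithZero S] [IsCancelMulZero S]
    (hgcd : ∀ a b : S, (a ≠ 0 ∨ b ≠ 0) →
      ∃ d : S, d ∣ a ∧ d ∣ b ∧ ∀ e : S, e ∣ a → e ∣ b → e ∣ d) :
    IsGCDMonoid S := by
  classical
  refine ⟨gcdMonoidOfExistsGCD fun a b => ?_⟩
  by_cases hab : a ≠ 0 ∨ b ≠ 0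
  · obtain ⟨d, hda, hdb, hd⟩ := hgcd a b hab
    exact ⟨d, fun e => ⟨fun ⟨hea, heb⟩ => hd e hea heb,
      fun hed => ⟨hed.trans hda, hed.trans hdb⟩⟩⟩
  · obtain ⟨rfl, rfl⟩ : a = 0 ∧ b = 0 := by simpa only [not_or, not_not] using hab
    exact ⟨0, fun _ => and_self_iff⟩

section Homogenize

variable {S K : Type*} [CommSemiring S] [CommSemiring K] [Algebra S K] {u : K} {x y : S}

/-- The value at `(x, y)` of the degree-`n` homogenization of `∑_{i<n} cᵢ Xⁱ`. -/
def homogenize (c : ℕ → S) (n : ℕ) (x y : S) : S :=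
  ∑ i ∈ range n, c i * (x ^ i * y ^ (n - i))

theorem dvd_homogenize (c : ℕ → S) (n : ℕ) (x y : S) : y ∣ homogenize c n x y :=
  dvd_sum fun _ hi =>
    ((dvd_pow_self y (Nat.sub_ne_zero_of_lt (mem_range.1 hi))).mul_left _).mul_left _

theorem algebraMap_pow_mul_pow_sub (hu : u * algebraMap S K y = algebraMap S K x) {i n : ℕ}
    (hi : i ≤ n) : algebraMap S K (x ^ i * y ^ (n - i)) = u ^ i * algebraMap S K y ^ n := by
  rw [map_mul, map_pow, map_pow, ← hu, mul_pow, mul_assoc, ← pow_add, Nat.add_sub_cancel' hi]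

theorem algebraMap_homogenize (hu : u * algebraMap S K y = algebraMap S K x) (c : ℕ → S)
    (n : ℕ) : algebraMap S K (homogenize c n x y) =
      (∑ i ∈ range n, algebraMap S K (c i) * u ^ i) * algebraMap S K y ^ n := by
  rw [homogenize, map_sum, sum_mul]
  refine sum_congr rfl fun i hi => ?_
  rw [map_mul, algebraMap_pow_mul_pow_sub hu (mem_range.1 hi).le, mul_assoc]

theorem pow_add_homogenize_eq (hinj : Function.Injective (algebraMap S K))
    (hu : u * algebraMap S K y = algebraMap S K x) {n : ℕ} {a b : ℕ → S}
    (heq : u ^ n + ∑ i ∈ range n, algebraMap S K (a i) * u ^ i =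
      ∑ i ∈ range n, algebraMap S K (b i) * u ^ i) :
    x ^ n + homogenize a n x y = homogenize b n x y := by
  have hxn : algebraMap S K (x ^ n) = u ^ n * algebraMap S K y ^ n := by
    simpa only [Nat.sub_self, pow_zero, mul_one] using algebraMap_pow_mul_pow_sub hu le_rfl
  apply hinj
  rw [map_add, hxn, algebraMap_homogenize hu, algebraMap_homogenize hu, ← add_mul, heq]

theorem dvd_pow_of_isSubtractive (hsub : (Ideal.span {y}).IsSubtractive) {n : ℕ} {a b : ℕ → S}
    (h : x ^ n + homogenize a n x y = homogenize b n x y) : y ∣ x ^ n := by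
  rw [← Ideal.mem_span_singleton]
  refine hsub _ _ ?_ (Ideal.mem_span_singleton.2 (dvd_homogenize a n x y))
  rw [add_comm, h]
  exact Ideal.mem_span_singleton.2 (dvd_homogenize b n x y)

end Homogenize

theorem exists_isRelPrime_mul_algebraMap_eq (S : Type*) {K : Type*} [CommSemiring S]
    [Nontrivial S] [GCDMonoid S] [CommSemiring K] [Algebra S K]
    [IsLocalization (nonZeroDivisors S) K] (u : K) :
    ∃ x y : S, IsRelPrime x y ∧ u * algebraMap S K y = algebraMap S K x := by
  obtain ⟨⟨x, y⟩, hu⟩ := IsLocalization.surj (nonZeroDivisors S) u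
  obtain ⟨x', y', hx, hy, hxy⟩ := extract_gcd x (y : S)
  have hg : gcd x (y : S) ≠ 0 := fun h =>
    nonZeroDivisors.coe_ne_zero y ((gcd_eq_zero_iff _ _).1 h).2
  have hgu : IsUnit (algebraMap S K (gcd x (y : S))) :=
    IsLocalization.map_units K (⟨_, mem_nonZeroDivisors_of_ne_zero hg⟩ : nonZeroDivisors S)
  refine ⟨x', y', gcd_isUnit_iff_isRelPrime.1 hxy, hgu.mul_left_cancel ?_⟩
  rw [mul_left_comm, ← map_mul, ← hy, hu, ← map_mul, ← hx]

/-- A GCD semidomain in which every principal ideal is subtractive is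
integrally closed in its semifield of fractions. -/
theorem gcd_semidomain_integrally_closed {S K : Type*} [CommSemiring S] [Nontrivial S]
    [IsCancelMulZero S] [CommSemiring K] [Algebra S K]
    [IsLocalization (nonZeroDivisors S) K]
    (hgcd : ∀ a b : S, (a ≠ 0 ∨ b ≠ 0) →
      ∃ d : S, d ≠ 0 ∧ d ∣ a ∧ d ∣ b ∧ ∀ e : S, e ∣ a → e ∣ b → e ∣ d)
    (hsub : ∀ (c : S) (a b : S), a + b ∈ Ideal.span {c} → a ∈ Ideal.span {c} →
      b ∈ Ideal.span ({c} : Set S)) :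
    ∀ u : K,
      (∃ n : ℕ, 0 < n ∧ ∃ a b : ℕ → S,
        u ^ n + ∑ i ∈ Finset.range n, algebraMap S K (a i) * u ^ i =
          ∑ i ∈ Finset.range n, algebraMap S K (b i) * u ^ i) →
      u ∈ Set.range (algebraMap S K) := by
  obtain ⟨_⟩ := IsGCDMonoid.of_exists_gcd fun a b hab => (hgcd a b hab).imp fun _ hd => hd.2
  have hinj : Function.Injective (algebraMap S K) :=
    IsLocalization.injectiveₛ (M := nonZeroDivisors S) (S := K) fun _ hm =>
      IsRegular.of_ne_zero (nonZeroDivisors.ne_zero hm)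
  rintro u ⟨n, -, a, b, heq⟩
  obtain ⟨x, y, hxy, hu⟩ := exists_isRelPrime_mul_algebraMap_eq S u
  have hdvd : y ∣ x ^ n := dvd_pow_of_isSubtractive (hsub y) (pow_add_homogenize_eq hinj hu heq)
  obtain ⟨v, rfl⟩ := hxy.pow_left.symm.isUnit_of_dvd hdvd
  refine ⟨x * ↑v⁻¹, ?_⟩
  rw [map_mul, ← hu, mul_assoc, ← map_mul, Units.mul_inv, map_one, mul_one]
end

section
/- Let S be a semidomain with semifield of fractions F(S), and let u be a nonzero element of S. Then the following are equivalent: (1) every nonzero prime ideal of S contains u; (2) every nonzero ideal of S contains some power of u; (3) F(S) = S[1/u]. -/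
/-!
(1) ⇔ (2): an ideal containing no power of `u` extends to a prime ideal containing no power of `u`.
(2) ⇔ (3): if `v * u = 1`, then `S[v]` consists of the fractions `x` with `uⁿ x ∈ S` for some `n`,
that is, those whose ideal of denominators `{b | b x ∈ S}` (here `(1 : Submodule S K).colon {x}`)
contains a power of `u`. Each fraction `a / t` has the nonzero denominator `t`. Conversely, if
`1 / a ∈ S[v]` for some nonzero `a ∈ I`, then `uⁿ = s a ∈ I`.
-/

theorem Ideal.forall_isPrime_mem_iff_forall_exists_pow_mem {S : Type*} [CommSemiring S] (u : S) :
    (∀ P : Ideal S, P.IsPrime → P ≠ ⊥ → u ∈ P) ↔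
      ∀ I : Ideal S, I ≠ ⊥ → ∃ n : ℕ, 1 ≤ n ∧ u ^ n ∈ I := by
  refine ⟨fun h I hI => ?_, fun h P hP hP0 => ?_⟩
  · by_contra! hpow
    have hdisj : Disjoint (I : Set S) (Submonoid.powers u) := by
      rw [Set.disjoint_right]
      rintro _ ⟨_ | n, rfl⟩ hn
      · exact hpow 1 le_rfl (by simpa using I.mul_mem_left u hn)
      · exact hpow (n + 1) n.succ_pos hn
    obtain ⟨P, hP, hIP, hPu⟩ := I.exists_le_prime_disjoint _ hdisj
    exact Set.disjoint_left.mp hPu (h P hP (ne_bot_of_le_ne_bot hI hIP)) (Submonoid.mem_powers u)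
  · obtain ⟨n, -, hn⟩ := h P hP0
    exact hP.mem_of_pow_mem n hn

theorem mem_closure_range_algebraMap_union_singleton_iff {S A : Type*} [CommSemiring S]
    [CommSemiring A] [Algebra S A] {u : S} {v : A} (hv : v * algebraMap S A u = 1) {z : A} :
    z ∈ Subsemiring.closure (Set.range (algebraMap S A) ∪ {v}) ↔
      ∃ (n : ℕ) (s : S), algebraMap S A (u ^ n) * z = algebraMap S A s := by
  constructor
  · intro hz
    induction hz using Subsemiring.closure_induction with
    | mem y hy =>
      rcases hy with ⟨s, rfl⟩ | hy
      · exact ⟨0, s, by simp⟩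
      · rw [Set.mem_singleton_iff.mp hy]
        exact ⟨1, 1, by rw [pow_one, mul_comm, hv, map_one]⟩
    | zero => exact ⟨0, 0, by simp⟩
    | one => exact ⟨0, 1, by simp⟩
    | add y z _ _ hy hz =>
      obtain ⟨m, s, hs⟩ := hy
      obtain ⟨n, t, ht⟩ := hz
      refine ⟨m + n, u ^ n * s + u ^ m * t, ?_⟩
      rw [pow_add, map_add, map_mul, map_mul, map_mul, mul_add, ← hs, ← ht]
      ring
    | mul y z _ _ hy hz =>
      obtain ⟨m, s, hs⟩ := hy
      obtain ⟨n, t, ht⟩ := hz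
      refine ⟨m + n, s * t, ?_⟩
      rw [pow_add, map_mul, map_mul, ← hs, ← ht]
      ring
  · rintro ⟨n, s, hs⟩
    have hvn : v ^ n * algebraMap S A (u ^ n) = 1 := by rw [map_pow, ← mul_pow, hv, one_pow]
    have hz : z = v ^ n * algebraMap S A s := by rw [← hs, ← mul_assoc, hvn, one_mul]
    rw [hz]
    refine mul_mem (pow_mem (Subsemiring.subset_closure ?_) n) (Subsemiring.subset_closure ?_)
    exacts [Set.mem_union_right _ rfl, Set.mem_union_left _ ⟨s, rfl⟩]

section Localization

variable {S K : Type*} [CommSemiring S] [Nontrivial S] [CommSemiring K] [Algebra S K]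
  [IsLocalization (nonZeroDivisors S) K] {u : S} {v : K}

theorem closure_range_algebraMap_union_singleton_eq_top (hv : v * algebraMap S K u = 1)
    (h : ∀ I : Ideal S, I ≠ ⊥ → ∃ n : ℕ, 1 ≤ n ∧ u ^ n ∈ I) :
    Subsemiring.closure (Set.range (algebraMap S K) ∪ {v}) = ⊤ := by
  refine eq_top_iff.mpr fun x _ => (mem_closure_range_algebraMap_union_singleton_iff hv).mpr ?_
  obtain ⟨⟨a, t⟩, hx⟩ := IsLocalization.surj (nonZeroDivisors S) x
  have hden (b : S) : b ∈ (1 : Submodule S K).colon {x} ↔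
      ∃ s : S, algebraMap S K b * x = algebraMap S K s := by
    simp only [Submodule.mem_colon_singleton, Submodule.mem_one, Algebra.smul_def, eq_comm]
  have ht : (t : S) ∈ (1 : Submodule S K).colon {x} := (hden t).mpr ⟨a, by rw [mul_comm, hx]⟩
  obtain ⟨n, -, hn⟩ := h _ ((Submodule.ne_bot_iff _).mpr ⟨t, ht, nonZeroDivisors.coe_ne_zero t⟩)
  exact ⟨n, (hden _).mp hn⟩

theorem exists_pow_mem_of_closure_range_algebraMap_union_singleton_eq_top [IsCancelMulZero S]
    (hv : v * algebraMap S K u = 1)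
    (hcl : Subsemiring.closure (Set.range (algebraMap S K) ∪ {v}) = ⊤)
    (I : Ideal S) (hI : I ≠ ⊥) : ∃ n : ℕ, 1 ≤ n ∧ u ^ n ∈ I := by
  obtain ⟨a, haI, ha0⟩ := (Submodule.ne_bot_iff I).mp hI
  let a' : nonZeroDivisors S := ⟨a, mem_nonZeroDivisors_of_ne_zero ha0⟩
  obtain ⟨n, s, hs⟩ := (mem_closure_range_algebraMap_union_singleton_iff hv).mp
    (hcl ▸ Subsemiring.mem_top (IsLocalization.mk' K (1 : S) a'))
  have hun : u ^ n = s * a := by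
    refine IsLocalization.injectiveₛ K (fun m hm => .of_ne_zero (nonZeroDivisors.ne_zero hm)) ?_
    rw [map_mul, ← hs, mul_assoc, IsLocalization.mk'_spec, map_one, mul_one]
  refine ⟨n + 1, n.succ_pos, ?_⟩
  rw [pow_succ, hun]
  exact I.mul_mem_right u (I.mul_mem_left s haI)

end Localization

/-- For a nonzero u in a semidomain S with semifield of fractions F(S), TFAE:
every nonzero prime ideal contains u; every nonzero ideal contains a power of u;
F(S) = S[1/u]. -/
theorem goldman_element_tfae {S K : Type*} [CommSemiring S] [Nontrivial S]
    [IsCancelMulZero S] [CommSemiring K] [Algebra S K]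
    [IsLocalization (nonZeroDivisors S) K]
    (u : S) (hu : u ≠ 0) :
    ((∀ P : Ideal S, P.IsPrime → P ≠ ⊥ → u ∈ P) ↔
      (∀ I : Ideal S, I ≠ ⊥ → ∃ n : ℕ, 1 ≤ n ∧ u ^ n ∈ I)) ∧
    ((∀ P : Ideal S, P.IsPrime → P ≠ ⊥ → u ∈ P) ↔
      (∃ v : K, v * algebraMap S K u = 1 ∧
        Subsemiring.closure (Set.range (algebraMap S K) ∪ {v}) = ⊤)) := by
  have h12 := Ideal.forall_isPrime_mem_iff_forall_exists_pow_mem u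
  let u' : nonZeroDivisors S := ⟨u, mem_nonZeroDivisors_of_ne_zero hu⟩
  have hv : IsLocalization.mk' K (1 : S) u' * algebraMap S K u = 1 := by
    rw [IsLocalization.mk'_spec, map_one]
  refine ⟨h12, h12.trans ⟨fun h2 => ?_, fun ⟨v, hv, hcl⟩ => ?_⟩⟩
  · exact ⟨_, hv, closure_range_algebraMap_union_singleton_eq_top hv h2⟩
  · exact exists_pow_mem_of_closure_range_algebraMap_union_singleton_eq_top hv hcl
end

section
/- A principal ideal semidomain S is a Goldman-Krull semidomain (i.e., its semifield of fractions is finitely generated as a semiring over S) if and only if S has only finitely many prime ideals. -/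
/-!
The semifield of fractions `K` is generated over `S` by finitely many fractions iff it is
generated by the inverse of a single common denominator `s ≠ 0`, i.e. iff every nonzero `a`
divides a power of `s`. Since the radical of `(a)` is the intersection of the primes containing
`a`, this says that `s` lies in every nonzero prime ideal. In a principal ideal semidomain a
nonzero element lies in only finitely many primes: factor it into irreducibles, each of which
generates a maximal ideal. Hence such an `s` exists iff there are finitely many primes, a nonzero
element of the product of the nonzero primes serving as `s` in the converse.
-/

open IsLocalization in
theorem Subsemiring.exists_isInteger_pow_smul_of_mem_closure {S K : Type*} [CommSemiring S]
    [CommSemiring K] [Algebra S K] {s : S} {T : Set K} (hT : ∀ t ∈ T, IsInteger S (s • t))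
    {x : K} (hx : x ∈ closure (Set.range (algebraMap S K) ∪ T)) :
    ∃ k : ℕ, IsInteger S (s ^ k • x) := by
  induction hx using closure_induction with
  | mem x hx =>
    rcases hx with ⟨c, rfl⟩ | hxT
    · exact ⟨0, by simpa using ⟨c, rfl⟩⟩
    · exact ⟨1, by simpa using hT x hxT⟩
  | zero => exact ⟨0, by simpa using isInteger_zero⟩
  | one => exact ⟨0, by simpa using isInteger_one⟩
  | add x y _ _ hx hy =>
    obtain ⟨k, hk⟩ := hx
    obtain ⟨m, hm⟩ := hy
    refine ⟨k + m, ?_⟩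
    rw [smul_add, pow_add, mul_comm, mul_smul, mul_comm, mul_smul]
    exact isInteger_add (isInteger_smul hk) (isInteger_smul hm)
  | mul x y _ _ hx hy =>
    obtain ⟨k, hk⟩ := hx
    obtain ⟨m, hm⟩ := hy
    refine ⟨k + m, ?_⟩
    rw [pow_add, mul_smul_mul_comm]
    exact isInteger_mul hk hm

theorem forall_ne_zero_dvd_pow_iff_forall_isPrime {R : Type*} [CommSemiring R] {s : R} :
    (∀ a : R, a ≠ 0 → ∃ k : ℕ, a ∣ s ^ k) ↔ ∀ P : Ideal R, P.IsPrime → P ≠ ⊥ → s ∈ P := by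
  constructor
  · intro hdvd P hP hPbot
    obtain ⟨a, haP, ha0⟩ := Submodule.exists_mem_ne_zero_of_ne_bot hPbot
    obtain ⟨k, hk⟩ := hdvd a ha0
    exact hP.mem_of_pow_mem k (P.mem_of_dvd hk haP)
  · intro hmem a ha0
    have : s ∈ (Ideal.span {a}).radical := by
      rw [Ideal.radical_eq_sInf, Submodule.mem_sInf]
      rintro P ⟨haP, hP⟩
      refine hmem P hP fun hPbot => ha0 ?_
      rw [hPbot, Ideal.span_le, Set.singleton_subset_iff] at haP
      exact haP
    obtain ⟨k, hk⟩ := this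
    exact ⟨k, Ideal.mem_span_singleton.1 hk⟩

namespace IsLocalization

variable {S K : Type*} [CommSemiring S] [IsDomain S] [CommSemiring K] [Algebra S K]
  [IsLocalization (nonZeroDivisors S) K]

theorem exists_finset_closure_eq_top_iff :
    (∃ T : Finset K, Subsemiring.closure (Set.range (algebraMap S K) ∪ T) = ⊤) ↔
      ∃ s : S, s ≠ 0 ∧ ∀ a : S, a ≠ 0 → ∃ k : ℕ, a ∣ s ^ k := by
  constructor
  · rintro ⟨T, hT⟩
    obtain ⟨⟨s, hs⟩, hsT⟩ := exist_integer_multiples_of_finset (nonZeroDivisors S) T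
    refine ⟨s, nonZeroDivisors.ne_zero hs, fun a ha => ?_⟩
    have ha' := mem_nonZeroDivisors_of_ne_zero ha
    have hx : mk' K 1 ⟨a, ha'⟩ ∈ Subsemiring.closure (Set.range (algebraMap S K) ∪ T) := by
      rw [hT]; trivial
    obtain ⟨k, c, hc⟩ := Subsemiring.exists_isInteger_pow_smul_of_mem_closure hsT hx
    have hinj : Function.Injective (algebraMap S K) :=
      IsLocalization.injectiveₛ K fun m hm => IsRegular.of_ne_zero (nonZeroDivisors.ne_zero hm)
    refine ⟨k, c, hinj ?_⟩
    rw [map_mul, hc, Algebra.smul_def, mul_left_comm, mk'_spec'_mk, map_one, mul_one]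
  · rintro ⟨s, hs, hdvd⟩
    have hs' := mem_nonZeroDivisors_of_ne_zero hs
    refine ⟨{mk' K 1 ⟨s, hs'⟩}, eq_top_iff.2 fun x _ => ?_⟩
    obtain ⟨⟨a, t⟩, rfl⟩ := mk'_surjective (nonZeroDivisors S) x
    obtain ⟨k, u, hu⟩ := hdvd t (nonZeroDivisors.ne_zero t.2)
    have : mk' K a t = algebraMap S K (a * u) * mk' K 1 ⟨s, hs'⟩ ^ k := by
      rw [mk'_eq_iff_eq_mul]
      calc algebraMap S K a = algebraMap S K a * (mk' K 1 ⟨s, hs'⟩ * algebraMap S K s) ^ k := by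
            rw [mk'_spec_mk, map_one, one_pow, mul_one]
        _ = algebraMap S K (a * u) * mk' K 1 ⟨s, hs'⟩ ^ k * algebraMap S K t := by
            rw [mul_pow, ← map_pow, hu, map_mul, map_mul]
            ring
    show mk' K a t ∈ _
    rw [this]
    exact Subsemiring.mul_mem _ (Subsemiring.subset_closure (Set.mem_union_left _ ⟨_, rfl⟩))
      (Subsemiring.pow_mem _ (Subsemiring.subset_closure (Set.mem_union_right _ (by simp))) k)

theorem exists_finset_closure_eq_top_iff_exists_ne_zero_forall_isPrime :
    (∃ T : Finset K, Subsemiring.closure (Set.range (algebraMap S K) ∪ T) = ⊤) ↔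
      ∃ s : S, s ≠ 0 ∧ ∀ P : Ideal S, P.IsPrime → P ≠ ⊥ → s ∈ P := by
  simp_rw [exists_finset_closure_eq_top_iff, forall_ne_zero_dvd_pow_iff_forall_isPrime]

end IsLocalization

namespace Ideal

theorem finite_setOf_isPrime_mem {R : Type*} [CommSemiring R] [IsDomain R]
    [IsPrincipalIdealRing R] {a : R} (ha : a ≠ 0) : {P : Ideal R | P.IsPrime ∧ a ∈ P}.Finite := by
  induction a using WfDvdMonoid.induction_on_irreducible with
  | zero => exact absurd rfl ha
  | unit u hu =>
    exact Set.finite_empty.subset fun P ⟨hP, huP⟩ => hP.ne_top (P.eq_top_of_isUnit_mem huP hu)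
  | mul a i ha0 hi ih =>
    refine ((ih ha0).insert (span {i})).subset ?_
    rintro P ⟨hP, hiaP⟩
    rcases hP.mem_or_mem hiaP with hiP | haP
    · left
      exact ((PrincipalIdealRing.isMaximal_of_irreducible hi).eq_of_le hP.ne_top
        (span_singleton_le_iff_mem P |>.2 hiP)).symm
    · exact Or.inr ⟨hP, haP⟩

theorem exists_ne_zero_forall_mem_of_finite {R : Type*} [CommSemiring R] [IsDomain R]
    {s : Set (Ideal R)} (hs : s.Finite) (hbot : ⊥ ∉ s) : ∃ a : R, a ≠ 0 ∧ ∀ I ∈ s, a ∈ I := by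
  have hprod : ∏ I ∈ hs.toFinset, I ≠ ⊥ := by
    rw [← zero_eq_bot, Ne, Finset.prod_eq_zero_iff]
    rintro ⟨I, hI, rfl⟩
    exact hbot (hs.mem_toFinset.1 hI)
  obtain ⟨a, ha, ha0⟩ := Submodule.exists_mem_ne_zero_of_ne_bot hprod
  exact ⟨a, ha0, fun I hI => prod_le_inf.trans (Finset.inf_le (hs.mem_toFinset.2 hI)) ha⟩

end Ideal

/-- A principal ideal semidomain is a Goldman-Krull semidomain (its semifield
of fractions is finitely generated as a semiring over it) iff it has only finitely many
prime ideals. -/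
theorem PISD_goldmanKrull_iff_finitely_many_primes {S K : Type*} [CommSemiring S]
    [Nontrivial S] [IsCancelMulZero S] [CommSemiring K] [Algebra S K]
    [IsLocalization (nonZeroDivisors S) K]
    (hpis : ∀ I : Ideal S, ∃ a : S, I = Ideal.span {a}) :
    (∃ T : Finset K, Subsemiring.closure (Set.range (algebraMap S K) ∪ T) = ⊤) ↔
      {P : Ideal S | P.IsPrime}.Finite := by
  have : IsDomain S := {}
  have : IsPrincipalIdealRing S := ⟨fun I => ⟨hpis I⟩⟩
  rw [IsLocalization.exists_finset_closure_eq_top_iff_exists_ne_zero_forall_isPrime]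
  constructor
  · rintro ⟨s, hs, hsP⟩
    refine ((Ideal.finite_setOf_isPrime_mem hs).insert ⊥).subset fun P hP => ?_
    by_cases hP0 : P = ⊥
    · exact Or.inl hP0
    · exact Or.inr ⟨hP, hsP P hP hP0⟩
  · intro hfin
    obtain ⟨s, hs, hsP⟩ := Ideal.exists_ne_zero_forall_mem_of_finite
      (s := {P : Ideal S | P.IsPrime ∧ P ≠ ⊥}) (hfin.subset fun P hP => hP.1) fun h => h.2 rfl
    exact ⟨s, hs, fun P hP hP0 => hsP P ⟨hP, hP0⟩⟩
end
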